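/- arXiv:1908.03751 — 2 statements merged into one kernel-verified Lean document; each statement's English description precedes it below -/
import Mathlib

section
/- The generating function F(Z,q) = Σ_{m≥0} Ω_{b,T}^Λ(m;Z) q^m satisfies the functional equation F(Z,q) = (1 + Y₁q + Y₂q² + ... + Y_λ q^λ) · F(Z^T, q^b), where Y_ν = Σ z_{1,i₁}···z_{ρ,i_ρ} over all (i₁,...,i_ρ) with i₁+...+i_ρ = ν and 0 ≤ i_ℓ ≤ λ_ℓ, and Z^T replaces z_{ℓ,i} by z_{ℓ,i}^{t_{ℓ,i}}. -/
open MvPolynomial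

/-- The variables `z_{ℓ,i}` (`1 ≤ ℓ ≤ ρ`, `1 ≤ i ≤ λ_ℓ`), indexed by pairs
`⟨ℓ, i⟩` with `ℓ : Fin ρ` and `i : Fin (Λ ℓ)`. -/
abbrev ColorIdx (ρ : ℕ) (Λ : Fin ρ → ℕ) := (ℓ : Fin ρ) × Fin (Λ ℓ)

/-- The factor of the generating-function product indexed by `j`:
`∏_{ℓ=1}^{ρ} (1 + z_{ℓ,1}^{t_{ℓ,1}^j} q^{b^j} + ⋯ + z_{ℓ,λ_ℓ}^{t_{ℓ,λ_ℓ}^j} q^{λ_ℓ b^j})`. -/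
noncomputable def OmegaFactor (b ρ : ℕ) (Λ : Fin ρ → ℕ) (T : ColorIdx ρ Λ → ℕ) (j : ℕ) :
    PowerSeries (MvPolynomial (ColorIdx ρ Λ) ℤ) :=
  ∏ ℓ : Fin ρ,
    (1 + ∑ i : Fin (Λ ℓ),
      PowerSeries.C (R := MvPolynomial (ColorIdx ρ Λ) ℤ)
          ((X (⟨ℓ, i⟩ : ColorIdx ρ Λ) : MvPolynomial (ColorIdx ρ Λ) ℤ) ^ T ⟨ℓ, i⟩ ^ j) *
        PowerSeries.X ^ ((i.1 + 1) * b ^ j))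

/-- `Ω` is (characterized as being) defined by the generating function
`∑_{n≥0} Ω(n; Z) q^n = ∏_{j≥0} OmegaFactor j`; the infinite product is rendered
coefficientwise via its stabilized partial products (`n < b^N`). -/
def IsOmega (b ρ : ℕ) (Λ : Fin ρ → ℕ) (T : ColorIdx ρ Λ → ℕ)
    (Om : ℕ → MvPolynomial (ColorIdx ρ Λ) ℤ) : Prop :=
  ∀ n N : ℕ, n < b ^ N →
    PowerSeries.coeff (R := MvPolynomial (ColorIdx ρ Λ) ℤ) n
      (∏ j ∈ Finset.range N, OmegaFactor b ρ Λ T j) = Om n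

/-- The substitution `Z ↦ Z^T`, replacing each variable `z_{ℓ,i}` by `z_{ℓ,i}^{t_{ℓ,i}}`. -/
noncomputable def substT (ρ : ℕ) (Λ : Fin ρ → ℕ) (T : ColorIdx ρ Λ → ℕ)
    (p : MvPolynomial (ColorIdx ρ Λ) ℤ) : MvPolynomial (ColorIdx ρ Λ) ℤ :=
  aeval (fun v : ColorIdx ρ Λ => (X v : MvPolynomial (ColorIdx ρ Λ) ℤ) ^ T v) p

/-- `Ycoeff ν = ∑ z_{1,i₁} ⋯ z_{ρ,i_ρ}`, summed over all `(i₁, …, i_ρ)` with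
`i₁ + ⋯ + i_ρ = ν` and `0 ≤ i_ℓ ≤ λ_ℓ`, where `z_{ℓ,0} = 1`.  (In particular
`Ycoeff 0 = 1` and `Ycoeff μ = 0` for `μ > λ₁ + ⋯ + λ_ρ`.) -/
noncomputable def Ycoeff (ρ : ℕ) (Λ : Fin ρ → ℕ) (ν : ℕ) :
    MvPolynomial (ColorIdx ρ Λ) ℤ :=
  ∑ i : (ℓ : Fin ρ) → Fin (Λ ℓ + 1),
    if (∑ ℓ, (i ℓ : ℕ)) = ν then
      ∏ ℓ, (if h : (i ℓ : ℕ) = 0 then 1 else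
        (X (⟨ℓ, ⟨(i ℓ : ℕ) - 1, by have := (i ℓ).isLt; omega⟩⟩ : ColorIdx ρ Λ) :
          MvPolynomial (ColorIdx ρ Λ) ℤ))
    else 0

/-!
The partial products `P_N = ∏_{j<N} OmegaFactor j` satisfy
`P_{N+1} = OmegaFactor 0 · P_N(Z^T, q^b)`, since `f(Z, q) ↦ f(Z^T, q^b)` is a ring homomorphism
sending the `j`-th factor to the `(j+1)`-st. As `F ≡ P_N` modulo `q^{b^N}` and the substitution
turns a congruence modulo `q^k` into one modulo `q^{bk}`, we get
`F ≡ OmegaFactor 0 · F(Z^T, q^b)` modulo `q^{b^{N+1}}` for every `N`.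
Expanding the product over `ℓ` gives `OmegaFactor 0 = 1 + Y₁q + ⋯ + Y_λ q^λ`.
-/

namespace PowerSeries

variable {R : Type*}

theorem eq_zero_of_forall_exists_X_pow_dvd [CommSemiring R] {f : R⟦X⟧}
    (h : ∀ n, ∃ k, n < k ∧ X ^ k ∣ f) : f = 0 := by
  ext n
  obtain ⟨k, hnk, hk⟩ := h n
  simpa using X_pow_dvd_iff.mp hk n hnk

theorem prod_sum_C_mul_X_pow [CommSemiring R] {ι : Type*} [Fintype ι] [DecidableEq ι]
    (d : ι → ℕ) (c : (ℓ : ι) → Fin (d ℓ + 1) → R) :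
    ∏ ℓ, ∑ i : Fin (d ℓ + 1), C (c ℓ i) * X ^ (i : ℕ) =
      ∑ ν ∈ Finset.range (∑ ℓ, d ℓ + 1),
        C (∑ i : (ℓ : ι) → Fin (d ℓ + 1),
          if ∑ ℓ, (i ℓ : ℕ) = ν then ∏ ℓ, c ℓ (i ℓ) else 0) * X ^ ν := by
  simp_rw [map_sum, Finset.sum_mul, apply_ite C, ite_mul, map_zero, zero_mul]
  rw [Finset.sum_comm, Finset.prod_univ_sum, Fintype.piFinset_univ]
  refine Finset.sum_congr rfl fun i _ => ?_
  have hi : ∑ ℓ, (i ℓ : ℕ) ∈ Finset.range (∑ ℓ, d ℓ + 1) :=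
    Finset.mem_range_succ_iff.mpr (Finset.sum_le_sum fun ℓ _ => Fin.is_le (i ℓ))
  rw [Finset.sum_ite_eq, if_pos hi, Finset.prod_mul_distrib, map_prod,
    Finset.prod_pow_eq_pow_sum]

theorem X_pow_dvd_expand_map [CommRing R] (σ : R →+* R) (b : ℕ) (hb : b ≠ 0) {k : ℕ}
    {f : R⟦X⟧} (h : X ^ k ∣ f) : X ^ (b * k) ∣ expand b hb (map σ f) := by
  simpa [pow_mul] using map_dvd (expand b hb) (map_dvd (map σ) h)

end PowerSeries

theorem OmegaFactor_zero_eq_sum_Ycoeff (b ρ : ℕ) (Λ : Fin ρ → ℕ) (T : ColorIdx ρ Λ → ℕ) :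
    OmegaFactor b ρ Λ T 0 =
      ∑ ν ∈ Finset.range ((∑ ℓ, Λ ℓ) + 1),
        PowerSeries.C (R := MvPolynomial (ColorIdx ρ Λ) ℤ) (Ycoeff ρ Λ ν) *
          PowerSeries.X ^ ν := by
  rw [OmegaFactor]
  convert PowerSeries.prod_sum_C_mul_X_pow (R := MvPolynomial (ColorIdx ρ Λ) ℤ) Λ
    (fun ℓ i => if h : (i : ℕ) = 0 then 1 else X ⟨ℓ, ⟨(i : ℕ) - 1, by omega⟩⟩) using 2
  · simp [Fin.sum_univ_succ]
  · rfl

section Twist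

variable {ρ : ℕ} {Λ : Fin ρ → ℕ} (T : ColorIdx ρ Λ → ℕ) (b : ℕ) (hb : b ≠ 0)

noncomputable def substTHom : MvPolynomial (ColorIdx ρ Λ) ℤ →+* MvPolynomial (ColorIdx ρ Λ) ℤ :=
  (aeval fun v : ColorIdx ρ Λ => (X v : MvPolynomial (ColorIdx ρ Λ) ℤ) ^ T v).toRingHom

/-- `f(Z, q) ↦ f(Z^T, q^b)`. -/
noncomputable def twist :
    PowerSeries (MvPolynomial (ColorIdx ρ Λ) ℤ) →+* PowerSeries (MvPolynomial (ColorIdx ρ Λ) ℤ) :=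
  (PowerSeries.expand b hb).toRingHom.comp (PowerSeries.map (substTHom T))

theorem coeff_twist (f : PowerSeries (MvPolynomial (ColorIdx ρ Λ) ℤ)) (n : ℕ) :
    PowerSeries.coeff n (twist T b hb f) =
      if b ∣ n then substT ρ Λ T (PowerSeries.coeff (n / b) f) else 0 := by
  simp [twist, PowerSeries.coeff_expand, substTHom, substT]

theorem twist_OmegaFactor (j : ℕ) :
    twist T b hb (OmegaFactor b ρ Λ T j) = OmegaFactor b ρ Λ T (j + 1) := by
  simp only [twist, OmegaFactor, RingHom.comp_apply, map_prod, map_add, map_one, map_sum,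
    map_mul, map_pow, PowerSeries.map_C, PowerSeries.map_X, AlgHom.toRingHom_eq_coe,
    RingHom.coe_coe, PowerSeries.expand_C, PowerSeries.expand_X, substTHom, aeval_X]
  refine Finset.prod_congr rfl fun ℓ _ => congrArg (1 + ·) (Finset.sum_congr rfl fun i _ => ?_)
  ring

theorem prod_range_succ_OmegaFactor (N : ℕ) :
    ∏ j ∈ Finset.range (N + 1), OmegaFactor b ρ Λ T j =
      OmegaFactor b ρ Λ T 0 * twist T b hb (∏ j ∈ Finset.range N, OmegaFactor b ρ Λ T j) := by
  rw [Finset.prod_range_succ', map_prod, mul_comm]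
  simp only [twist_OmegaFactor]

end Twist

theorem IsOmega.X_pow_dvd_sub_prod {b ρ : ℕ} {Λ : Fin ρ → ℕ} {T : ColorIdx ρ Λ → ℕ}
    {Om : ℕ → MvPolynomial (ColorIdx ρ Λ) ℤ} (hOm : IsOmega b ρ Λ T Om) (N : ℕ) :
    PowerSeries.X ^ (b ^ N) ∣
      PowerSeries.mk Om - ∏ j ∈ Finset.range N, OmegaFactor b ρ Λ T j :=
  PowerSeries.X_pow_dvd_iff.mpr fun n hn => by simp [hOm n N hn]

theorem Omega_functional_equation_general (b ρ : ℕ) (hb : 2 ≤ b)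
    (Λ : Fin ρ → ℕ) (T : ColorIdx ρ Λ → ℕ)
    (Om : ℕ → MvPolynomial (ColorIdx ρ Λ) ℤ) (hOm : IsOmega b ρ Λ T Om) :
    PowerSeries.mk Om =
      (∑ ν ∈ Finset.range ((∑ ℓ, Λ ℓ) + 1),
          PowerSeries.C (R := MvPolynomial (ColorIdx ρ Λ) ℤ) (Ycoeff ρ Λ ν) *
            PowerSeries.X ^ ν) *
        PowerSeries.mk (fun m =>
          if b ∣ m then substT ρ Λ T (Om (m / b)) else 0) := by
  have hb0 : b ≠ 0 := by omega
  have htwist : PowerSeries.mk (fun m => if b ∣ m then substT ρ Λ T (Om (m / b)) else 0) =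
      twist T b hb0 (PowerSeries.mk Om) := by
    ext m
    simp [coeff_twist]
  rw [← OmegaFactor_zero_eq_sum_Ycoeff b ρ Λ T, htwist, ← sub_eq_zero]
  refine PowerSeries.eq_zero_of_forall_exists_X_pow_dvd fun n =>
    ⟨b ^ (n + 1), (Nat.lt_pow_self hb).trans (Nat.pow_lt_pow_right hb n.lt_succ_self), ?_⟩
  have hsplit : PowerSeries.mk Om - OmegaFactor b ρ Λ T 0 * twist T b hb0 (PowerSeries.mk Om) =
      (PowerSeries.mk Om - ∏ j ∈ Finset.range (n + 1), OmegaFactor b ρ Λ T j) -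
        OmegaFactor b ρ Λ T 0 *
          twist T b hb0 (PowerSeries.mk Om - ∏ j ∈ Finset.range n, OmegaFactor b ρ Λ T j) := by
    rw [prod_range_succ_OmegaFactor T b hb0, map_sub]
    ring
  rw [hsplit]
  refine dvd_sub (hOm.X_pow_dvd_sub_prod (n + 1)) (dvd_mul_of_dvd_right ?_ _)
  rw [pow_succ']
  exact PowerSeries.X_pow_dvd_expand_map (substTHom T) b hb0 (hOm.X_pow_dvd_sub_prod n)

/-- Functional equation for the generating function `F(Z, q) = ∑_{m≥0} Ω(m; Z) q^m`:
`F(Z, q) = (1 + Y₁ q + ⋯ + Y_λ q^λ) · F(Z^T, q^b)`, where `F(Z^T, q^b)` is the power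
series whose coefficient of `q^{bm}` is `Ω(m; Z^T)` (and whose other coefficients
vanish), and `Y₀ = 1`. -/
theorem Omega_functional_equation (b ρ : ℕ) (hb : 2 ≤ b) (hρ : 1 ≤ ρ)
    (Λ : Fin ρ → ℕ) (hΛ : ∀ ℓ, 1 ≤ Λ ℓ) (T : ColorIdx ρ Λ → ℕ) (hT : ∀ v, 1 ≤ T v)
    (Om : ℕ → MvPolynomial (ColorIdx ρ Λ) ℤ) (hOm : IsOmega b ρ Λ T Om) :
    PowerSeries.mk Om =
      (∑ ν ∈ Finset.range ((∑ ℓ, Λ ℓ) + 1),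
          PowerSeries.C (R := MvPolynomial (ColorIdx ρ Λ) ℤ) (Ycoeff ρ Λ ν) *
            PowerSeries.X ^ ν) *
        PowerSeries.mk (fun m =>
          if b ∣ m then substT ρ Λ T (Om (m / b)) else 0) :=
  Omega_functional_equation_general b ρ hb Λ T Om hOm
end

section
/- Let b ≥ 2, ℓ ≥ 1, n ≥ 1 be integers, ρ ≥ 1, Λ = (λ₁,...,λ_ρ) with λ = λ₁+...+λ_ρ. If b ≤ λ, then for all integers j with (λ-b+1)·(b^ℓ-1)/(b-1) ≤ j ≤ b^ℓ - 1, the factorization Ω_{b,T}^Λ(n·b^ℓ + j; Z) = Ω_{b,T}^Λ(n; Z^{T^ℓ}) · Ω_{b,T}^Λ(j; Z) holds; if b > λ, this factorization holds for all 0 ≤ j ≤ b^ℓ - 1. Here Z^{T^ℓ} replaces each variable z_{ℓ',i} by z_{ℓ',i}^{t_{ℓ',i}^ℓ}. -/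
open MvPolynomial

/-- The substitution `Z ↦ Z^{T^ℓ}`, replacing each variable `z_{ℓ',i}` by
`z_{ℓ',i}^{t_{ℓ',i}^ℓ}`. -/
noncomputable def substTpow (ρ : ℕ) (Λ : Fin ρ → ℕ) (T : ColorIdx ρ Λ → ℕ) (l : ℕ)
    (p : MvPolynomial (ColorIdx ρ Λ) ℤ) : MvPolynomial (ColorIdx ρ Λ) ℤ :=
  aeval (fun v : ColorIdx ρ Λ => (X v : MvPolynomial (ColorIdx ρ Λ) ℤ) ^ T v ^ l) p

/-!
Every factor of the generating product is a polynomial in `q`, of degree `λ b^j`, and the factor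
of index `j + l` is the factor of index `j` after `q ↦ q^{b^l}`, `Z ↦ Z^{T^l}`. So the partial
product up to `l + n` is `G(q) · H(q^{b^l})`, where `G`, the product of the first `l` factors,
has degree at most `λ (b^l - 1)/(b - 1)`, and `H` is the product of the first `n` factors with
`Z^{T^l}` substituted. In the coefficient of `q^{n b^l + j}` only `[q^j] G · [q^n] H` survives:
every other term needs a coefficient of `G` in degree `≥ b^l + j`, which the bound on `j` puts
beyond the degree of `G`.
-/

namespace Polynomial

theorem coeff_mul_expand_of_natDegree_lt {R : Type*} [CommSemiring R] {p q : R[X]} {k j : ℕ}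
    (hj : j < k) (hp : p.natDegree < k + j) (n : ℕ) :
    (p * expand R k q).coeff (n * k + j) = p.coeff j * q.coeff n := by
  have hk : 0 < k := by omega
  rw [coeff_mul, Finset.sum_eq_single_of_mem (j, n * k)
      (Finset.HasAntidiagonal.mem_antidiagonal.2 (add_comm _ _)),
    coeff_expand hk, if_pos (dvd_mul_left k n), Nat.mul_div_cancel n hk]
  rintro ⟨u, v⟩ huv hne
  rw [Finset.HasAntidiagonal.mem_antidiagonal] at huv
  rw [coeff_expand hk]
  split_ifs with hdvd
  · obtain ⟨a, rfl⟩ := hdvd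
    have han : a < n := by
      by_contra! hna
      rcases hna.eq_or_lt with rfl | hlt
      · exact hne (Prod.ext (by simp only; lia) (by simp only; ring))
      · nlinarith
    rw [coeff_eq_zero_of_natDegree_lt (by nlinarith), zero_mul]
  · rw [mul_zero]

end Polynomial

-- `c + 1 - b` truncates to `0` when `c < b`, so then the hypothesis on `j` is void.
theorem Nat.mul_geomSum_lt_pow_add {b c l j : ℕ} (hb : 1 ≤ b)
    (hj : (c + 1 - b) * ∑ i ∈ Finset.range l, b ^ i ≤ j) :
    c * ∑ i ∈ Finset.range l, b ^ i < b ^ l + j := by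
  set S := ∑ i ∈ Finset.range l, b ^ i
  have hgeom : (b - 1) * S = b ^ l - 1 := by rw [mul_comm]; exact geom_sum_mul_of_one_le hb l
  have hpow : 1 ≤ b ^ l := Nat.one_le_pow _ _ hb
  calc c * S ≤ ((b - 1) + (c + 1 - b)) * S := Nat.mul_le_mul_right _ (by omega)
    _ = (b ^ l - 1) + (c + 1 - b) * S := by rw [add_mul, hgeom]
    _ < b ^ l + j := by omega

open scoped Polynomial

section Omega

variable (b : ℕ) {ρ : ℕ} {Λ : Fin ρ → ℕ} (T : ColorIdx ρ Λ → ℕ)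

noncomputable def omegaFactorPoly (j : ℕ) : (MvPolynomial (ColorIdx ρ Λ) ℤ)[X] :=
  ∏ ℓ : Fin ρ, (1 + ∑ i : Fin (Λ ℓ),
    Polynomial.C ((X ⟨ℓ, i⟩ : MvPolynomial (ColorIdx ρ Λ) ℤ) ^ T ⟨ℓ, i⟩ ^ j) *
      Polynomial.X ^ ((i.1 + 1) * b ^ j))

theorem coe_omegaFactorPoly (j : ℕ) :
    (omegaFactorPoly b T j : PowerSeries (MvPolynomial (ColorIdx ρ Λ) ℤ)) =
      OmegaFactor b ρ Λ T j := by
  rw [← Polynomial.coeToPowerSeries.ringHom_apply]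
  simp only [omegaFactorPoly, OmegaFactor, map_prod, map_add, map_one, map_sum, map_mul, map_pow,
    Polynomial.coeToPowerSeries.ringHom_apply, Polynomial.coe_C, Polynomial.coe_X]

noncomputable def substTpowHom (l : ℕ) :
    MvPolynomial (ColorIdx ρ Λ) ℤ →+* MvPolynomial (ColorIdx ρ Λ) ℤ :=
  (aeval fun v : ColorIdx ρ Λ => (X v : MvPolynomial (ColorIdx ρ Λ) ℤ) ^ T v ^ l).toRingHom

theorem omegaFactorPoly_add (j l : ℕ) :
    omegaFactorPoly b T (j + l) =
      Polynomial.expand _ (b ^ l) ((omegaFactorPoly b T j).map (substTpowHom T l)) := by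
  simp only [omegaFactorPoly, Polynomial.map_prod, map_prod, Polynomial.map_add, map_add,
    Polynomial.map_one, map_one, Polynomial.map_sum, map_sum, Polynomial.map_mul, map_mul,
    Polynomial.map_pow, map_pow, Polynomial.map_C, Polynomial.map_X, Polynomial.expand_C,
    Polynomial.expand_X]
  refine Finset.prod_congr rfl fun ℓ _ => congrArg (1 + ·) (Finset.sum_congr rfl fun i _ => ?_)
  simp only [substTpowHom, AlgHom.toRingHom_eq_coe, RingHom.coe_coe, aeval_X, ← pow_mul,
    ← Polynomial.C_pow, ← pow_add, add_comm l j]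
  ring

theorem natDegree_omegaFactorPoly_le (j : ℕ) :
    (omegaFactorPoly b T j).natDegree ≤ (∑ ℓ, Λ ℓ) * b ^ j := by
  rw [Finset.sum_mul]
  refine (Polynomial.natDegree_prod_le _ _).trans (Finset.sum_le_sum fun ℓ _ => ?_)
  refine Polynomial.natDegree_add_le_of_degree_le (by simp) ?_
  refine Polynomial.natDegree_sum_le_of_forall_le _ _ fun i _ => ?_
  exact (Polynomial.natDegree_C_mul_X_pow_le _ _).trans
    (Nat.mul_le_mul_right _ (by omega))

theorem IsOmega.eq_coeff {Om : ℕ → MvPolynomial (ColorIdx ρ Λ) ℤ} (hOm : IsOmega b ρ Λ T Om)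
    {m N : ℕ} (hm : m < b ^ N) :
    Om m = (∏ j ∈ Finset.range N, omegaFactorPoly b T j).coeff m := by
  rw [← hOm m N hm, ← Polynomial.coeff_coe,
    ← Polynomial.coeToPowerSeries.ringHom_apply, map_prod Polynomial.coeToPowerSeries.ringHom]
  simp only [Polynomial.coeToPowerSeries.ringHom_apply, coe_omegaFactorPoly]

theorem IsOmega.factorization {Om : ℕ → MvPolynomial (ColorIdx ρ Λ) ℤ}
    (hOm : IsOmega b ρ Λ T Om) (hb : 1 < b) {l j : ℕ} (n : ℕ) (hj : j < b ^ l)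
    (hdeg : (∑ ℓ, Λ ℓ) * ∑ i ∈ Finset.range l, b ^ i < b ^ l + j) :
    Om (n * b ^ l + j) = substTpow ρ Λ T l (Om n) * Om j := by
  have hN : n * b ^ l + j < b ^ (l + n) :=
    calc n * b ^ l + j < (n + 1) * b ^ l := by rw [add_mul, one_mul]; omega
      _ ≤ b ^ n * b ^ l := Nat.mul_le_mul_right _ (Nat.lt_pow_self hb)
      _ = b ^ (l + n) := by rw [pow_add, mul_comm]
  have hhigh : ∏ x ∈ Finset.range n, omegaFactorPoly b T (l + x) =
      Polynomial.expand _ (b ^ l)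
        ((∏ x ∈ Finset.range n, omegaFactorPoly b T x).map (substTpowHom T l)) := by
    simp only [Polynomial.map_prod, map_prod, add_comm l, omegaFactorPoly_add]
  have hlow : (∏ x ∈ Finset.range l, omegaFactorPoly b T x).natDegree < b ^ l + j := by
    refine (Polynomial.natDegree_prod_le _ _).trans_lt (lt_of_le_of_lt ?_ hdeg)
    rw [Finset.mul_sum]
    exact Finset.sum_le_sum fun i _ => natDegree_omegaFactorPoly_le b T i
  rw [hOm.eq_coeff b T hN, Finset.prod_range_add, hhigh,
    Polynomial.coeff_mul_expand_of_natDegree_lt hj hlow, Polynomial.coeff_map,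
    ← hOm.eq_coeff b T hj, ← hOm.eq_coeff b T (Nat.lt_pow_self hb), mul_comm]
  rfl

end Omega

theorem Omega_factorization_general (b ρ : ℕ) (hb : 2 ≤ b)
    (Λ : Fin ρ → ℕ) (T : ColorIdx ρ Λ → ℕ)
    (Om : ℕ → MvPolynomial (ColorIdx ρ Λ) ℤ) (hOm : IsOmega b ρ Λ T Om)
    (l n : ℕ) :
    (b ≤ ∑ ℓ, Λ ℓ →
      ∀ j : ℕ, ((∑ ℓ, Λ ℓ) - b + 1) * (b ^ l - 1) / (b - 1) ≤ j → j ≤ b ^ l - 1 →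
        Om (n * b ^ l + j) = substTpow ρ Λ T l (Om n) * Om j) ∧
    ((∑ ℓ, Λ ℓ) < b →
      ∀ j : ℕ, j ≤ b ^ l - 1 →
        Om (n * b ^ l + j) = substTpow ρ Λ T l (Om n) * Om j) := by
  have hpow : 0 < b ^ l := by positivity
  have hgeom : b ^ l - 1 = (b - 1) * ∑ i ∈ Finset.range l, b ^ i := by
    rw [mul_comm]; exact (geom_sum_mul_of_one_le (by omega) l).symm
  refine ⟨fun hbΛ j hjlo hjhi => ?_, fun hΛb j hjhi => ?_⟩
  · refine hOm.factorization b T hb n (by omega) (Nat.mul_geomSum_lt_pow_add (by omega) ?_)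
    rwa [hgeom, mul_left_comm, Nat.mul_div_cancel_left _ (by omega),
      ← Nat.sub_add_comm hbΛ] at hjlo
  · refine hOm.factorization b T hb n (by omega) (Nat.mul_geomSum_lt_pow_add (by omega) ?_)
    rw [Nat.sub_eq_zero_of_le hΛb, zero_mul]
    exact Nat.zero_le j

/-- Factorization: for `b ≥ 2`, `ℓ ≥ 1`, `n ≥ 1`, with `λ = λ₁ + ⋯ + λ_ρ`:
if `b ≤ λ`, then `Ω(n b^ℓ + j; Z) = Ω(n; Z^{T^ℓ}) · Ω(j; Z)` for all `j` with
`(λ-b+1)(b^ℓ-1)/(b-1) ≤ j ≤ b^ℓ - 1`; if `b > λ`, the same holds for all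
`0 ≤ j ≤ b^ℓ - 1`. -/
theorem Omega_factorization (b ρ : ℕ) (hb : 2 ≤ b) (hρ : 1 ≤ ρ)
    (Λ : Fin ρ → ℕ) (hΛ : ∀ ℓ, 1 ≤ Λ ℓ) (T : ColorIdx ρ Λ → ℕ) (hT : ∀ v, 1 ≤ T v)
    (Om : ℕ → MvPolynomial (ColorIdx ρ Λ) ℤ) (hOm : IsOmega b ρ Λ T Om)
    (l n : ℕ) (hl : 1 ≤ l) (hn : 1 ≤ n) :
    (b ≤ ∑ ℓ, Λ ℓ →
      ∀ j : ℕ, ((∑ ℓ, Λ ℓ) - b + 1) * (b ^ l - 1) / (b - 1) ≤ j → j ≤ b ^ l - 1 →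
        Om (n * b ^ l + j) = substTpow ρ Λ T l (Om n) * Om j) ∧
    ((∑ ℓ, Λ ℓ) < b →
      ∀ j : ℕ, j ≤ b ^ l - 1 →
        Om (n * b ^ l + j) = substTpow ρ Λ T l (Om n) * Om j) :=
  Omega_factorization_general b ρ hb Λ T Om hOm l n
end
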